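/- Let w ∈ C¹([-1/2,1/2]) and n(t) = N((0,w(t))ᵀ). Then ∫_{-1/2}^{1/2} |n'(t)| dt ≤ arccos(n(-1/2)·n(1/2)) + 2∫_{-1/2}^{1/2} |min(0, w'(t))| dt, using that |n'(t)| ≤ |w'(t)| pointwise. -/

import Mathlib

/-!
Along the great circle through the south pole, `n(t)` sits at angle `arctan (w t)`, so
`|n'| = |w'| / (1 + w²)` while `w' / (1 + w²)` is the derivative of `arctan ∘ w`. Since
`|x| = x + 2 |min 0 x|` and `1 + w² ≥ 1`, integrating gives the bound with
`arctan (w (1/2)) - arctan (w (-1/2))`, and the geodesic distance between the endpoint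
normals is the absolute value of this difference of angles.
-/

open Real

/-- The Gauss map of a graph: N(v) = (1+|v|²)^{-1/2} (v₁, v₂, -1) ∈ S² ⊂ ℝ³. -/
noncomputable def Nmap (v : Fin 2 → ℝ) : EuclideanSpace ℝ (Fin 3) :=
  (Real.sqrt (1 + v 0 ^ 2 + v 1 ^ 2))⁻¹ •
    (WithLp.equiv 2 (Fin 3 → ℝ)).symm ![v 0, v 1, -1]

lemma inner_Nmap_zero (a b : ℝ) : (inner ℝ (Nmap ![0, a]) (Nmap ![0, b]) : ℝ)
    = (1 + a * b) / (√(1 + a ^ 2) * √(1 + b ^ 2)) := by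
  have ha : 0 < √(1 + a ^ 2) := sqrt_pos.2 (by positivity)
  have hb : 0 < √(1 + b ^ 2) := sqrt_pos.2 (by positivity)
  simp only [Nmap, PiLp.inner_apply, WithLp.equiv_symm_apply, PiLp.smul_apply, smul_eq_mul,
    Matrix.cons_val_zero, Matrix.cons_val_one, Matrix.cons_val_two, Matrix.tail_cons,
    Matrix.head_cons, RCLike.inner_apply, conj_trivial, Fin.sum_univ_three, ne_eq,
    OfNat.ofNat_ne_zero, not_false_eq_true, zero_pow, add_zero]
  field_simp
  ring

lemma cos_arctan_sub_arctan (a b : ℝ) :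
    cos (arctan b - arctan a) = (1 + a * b) / (√(1 + a ^ 2) * √(1 + b ^ 2)) := by
  have ha : 0 < √(1 + a ^ 2) := sqrt_pos.2 (by positivity)
  have hb : 0 < √(1 + b ^ 2) := sqrt_pos.2 (by positivity)
  rw [cos_sub, cos_arctan, sin_arctan, cos_arctan, sin_arctan]
  field_simp

lemma abs_arctan_sub_arctan_le_pi (a b : ℝ) : |arctan b - arctan a| ≤ π := by
  have hb := abs_lt.2 ⟨neg_pi_div_two_lt_arctan b, arctan_lt_pi_div_two b⟩
  have ha := abs_lt.2 ⟨neg_pi_div_two_lt_arctan a, arctan_lt_pi_div_two a⟩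
  linarith [abs_sub (arctan b) (arctan a)]

lemma arccos_inner_Nmap_zero (a b : ℝ) :
    arccos (inner ℝ (Nmap ![0, a]) (Nmap ![0, b]) : ℝ) = |arctan b - arctan a| := by
  rw [inner_Nmap_zero, ← cos_arctan_sub_arctan, ← cos_abs,
    arccos_cos (abs_nonneg _) (abs_arctan_sub_arctan_le_pi a b)]

lemma abs_eq_add_two_mul_abs_min_zero (x : ℝ) : |x| = x + 2 * |min 0 x| := by
  rcases le_or_gt 0 x with hx | hx
  · simp [abs_of_nonneg hx, hx]
  · rw [abs_of_neg hx, min_eq_right hx.le, abs_of_neg hx]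
    ring

lemma abs_div_one_add_sq_le (x y : ℝ) :
    |x| / (1 + y ^ 2) ≤ x / (1 + y ^ 2) + 2 * |min 0 x| := by
  rw [abs_eq_add_two_mul_abs_min_zero x, add_div]
  gcongr
  exact div_le_self (by positivity) (le_add_of_nonneg_right (sq_nonneg y))

open Set MeasureTheory intervalIntegral

section
variable {w w' : ℝ → ℝ} {a b : ℝ}

lemma integral_deriv_div_one_add_sq_eq (hab : a ≤ b)
    (hw : ∀ t ∈ Icc a b, HasDerivWithinAt w (w' t) (Icc a b) t)
    (hint : IntervalIntegrable (fun t => w' t / (1 + w t ^ 2)) volume a b) :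
    ∫ t in a..b, w' t / (1 + w t ^ 2) = arctan (w b) - arctan (w a) := by
  refine integral_eq_sub_of_hasDerivAt_of_le hab
    (continuous_arctan.comp_continuousOn fun t ht => (hw t ht).continuousWithinAt)
    (fun t ht => ?_) hint
  have hwt : HasDerivAt w (w' t) t :=
    (hw t (Ioo_subset_Icc_self ht)).hasDerivAt (Icc_mem_nhds ht.1 ht.2)
  simpa only [one_div_mul_eq_div] using (hasDerivAt_arctan (w t)).comp t hwt

theorem integral_abs_div_one_add_sq_le (hab : a ≤ b)
    (hw : ∀ t ∈ Icc a b, HasDerivWithinAt w (w' t) (Icc a b) t)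
    (hw' : ContinuousOn w' (Icc a b)) :
    ∫ t in a..b, |w' t| / (1 + w t ^ 2)
      ≤ |arctan (w b) - arctan (w a)| + 2 * ∫ t in a..b, |min 0 (w' t)| := by
  have hden : ContinuousOn (fun t => 1 + w t ^ 2) (Icc a b) :=
    continuousOn_const.add (ContinuousOn.pow (fun t ht => (hw t ht).continuousWithinAt) 2)
  have hden_ne : ∀ t ∈ Icc a b, 1 + w t ^ 2 ≠ 0 := fun t _ => by positivity
  have hint_abs : IntervalIntegrable (fun t => |w' t| / (1 + w t ^ 2)) volume a b :=
    (hw'.abs.div hden hden_ne).intervalIntegrable_of_Icc hab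
  have hint_deriv : IntervalIntegrable (fun t => w' t / (1 + w t ^ 2)) volume a b :=
    (hw'.div hden hden_ne).intervalIntegrable_of_Icc hab
  have hint_neg : IntervalIntegrable (fun t => 2 * |min 0 (w' t)|) volume a b :=
    ((continuousOn_const.inf hw').abs.intervalIntegrable_of_Icc hab).const_mul 2
  calc ∫ t in a..b, |w' t| / (1 + w t ^ 2)
      ≤ ∫ t in a..b, (w' t / (1 + w t ^ 2) + 2 * |min 0 (w' t)|) :=
        integral_mono_on hab hint_abs (hint_deriv.add hint_neg)
          fun t _ => abs_div_one_add_sq_le _ _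
    _ = (arctan (w b) - arctan (w a)) + 2 * ∫ t in a..b, |min 0 (w' t)| := by
        rw [integral_add hint_deriv hint_neg, intervalIntegral.integral_const_mul,
          integral_deriv_div_one_add_sq_eq hab hw hint_deriv]
    _ ≤ _ := by gcongr; exact le_abs_self _

end

open Set intervalIntegral in
/-- Upper bound for the total variation of the normal: the spherical angle of
the endpoint normals plus twice the mass of the negative part of w'.
Here |n'(t)| = |w'(t)|/(1+w(t)²). -/
theorem stmt17 (w w' : ℝ → ℝ)
    (hw : ∀ t ∈ Icc (-(1:ℝ)/2) (1/2), HasDerivWithinAt w (w' t) (Icc (-(1:ℝ)/2) (1/2)) t)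
    (hw' : ContinuousOn w' (Icc (-(1:ℝ)/2) (1/2))) :
    (∫ t in (-(1:ℝ)/2)..(1/2), |w' t| / (1 + (w t) ^ 2))
      ≤ Real.arccos (inner ℝ (Nmap ![0, w (-(1:ℝ)/2)]) (Nmap ![0, w (1/2)]) : ℝ)
        + 2 * ∫ t in (-(1:ℝ)/2)..(1/2), |min 0 (w' t)| := by
  rw [arccos_inner_Nmap_zero]
  exact integral_abs_div_one_add_sq_le (by norm_num) hw hw'
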